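/- For every ℓ ≥ 1: K̇^(ℓ)(x,x') = ρ'( K^(ℓ−1)(x,x') / √(u^(ℓ−1)) ), and ρ'(r̂_−^(ℓ)) ≤ K̇^(ℓ)(x,x') ≤ ρ'(1) = 1, where u^(ℓ) = (‖x‖² + ℓσ_b²)·(‖x'‖² + ℓσ_b²), r̂_−^(1) = −1, and r̂_−^(ℓ) = ρ(r̂_−^(ℓ−1))·(ℓ−2)/(ℓ−1) for ℓ ≥ 2. -/

import Mathlib

open Real

/-- The dual activation function of the scaled ReLU `φ(t) = √2·max(t,0)`. -/
noncomputable def rho (r : ℝ) : ℝ :=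
  (1 / π) * (Real.sqrt (1 - r ^ 2) + (π - Real.arccos r) * r)

/-- The dual activation function of the derivative of the scaled ReLU. -/
noncomputable def rhoPrime (r : ℝ) : ℝ := (π - Real.arccos r) / π

/-- The depth-`ℓ` NNGP kernel `K^(ℓ)` of a ReLU network with bias variance `σb²`,
defined recursively by `K^(0)(v,w) = ⟪v,w⟫` and
`K^(ℓ)(v,w) = √(K^(ℓ−1)(v,v)·K^(ℓ−1)(w,w))·ρ(K^(ℓ−1)(v,w)/√(K^(ℓ−1)(v,v)·K^(ℓ−1)(w,w))) + σb²`. -/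
noncomputable def Kker (σb : ℝ) {d : ℕ} :
    ℕ → EuclideanSpace ℝ (Fin d) → EuclideanSpace ℝ (Fin d) → ℝ
  | 0, v, w => (inner ℝ v w : ℝ)
  | ℓ + 1, v, w =>
      Real.sqrt (Kker σb ℓ v v * Kker σb ℓ w w) *
        rho (Kker σb ℓ v w / Real.sqrt (Kker σb ℓ v v * Kker σb ℓ w w)) + σb ^ 2

/-- `u^(ℓ) = (‖x‖² + ℓσ_b²)·(‖x'‖² + ℓσ_b²)`, stated for the norms `a = ‖x‖`, `b = ‖x'‖`. -/
noncomputable def uFun (σb a b : ℝ) (ℓ : ℕ) : ℝ :=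
  (a ^ 2 + ℓ * σb ^ 2) * (b ^ 2 + ℓ * σb ^ 2)

/-- `r̂_−^(1) = −1` and `r̂_−^(ℓ) = ρ(r̂_−^(ℓ−1))·(ℓ−2)/(ℓ−1)` for `ℓ ≥ 2`
(the value at `0` is junk). -/
noncomputable def rHatM : ℕ → ℝ
  | 0 => 0
  | 1 => -1
  | (n + 2) => rho (rHatM (n + 1)) * (n : ℝ) / ((n : ℝ) + 1)

/-- `K̇^(ℓ)(v,w) = ρ'( K^(ℓ−1)(v,w) / √(K^(ℓ−1)(v,v)·K^(ℓ−1)(w,w)) )` for `ℓ ≥ 1`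
(the value at `ℓ = 0` is junk). -/
noncomputable def Kdot (σb : ℝ) {d : ℕ} :
    ℕ → EuclideanSpace ℝ (Fin d) → EuclideanSpace ℝ (Fin d) → ℝ
  | 0, _, _ => 1
  | ℓ + 1, v, w =>
      rhoPrime (Kker σb ℓ v w / Real.sqrt (Kker σb ℓ v v * Kker σb ℓ w w))

/-! On the diagonal `ρ(1) = 1` gives `K^(ℓ)(v,v) = ‖v‖² + ℓσ_b²`, so the normaliser in `K̇^(ℓ+1)` is
`√u^(ℓ)`, and with `r^(ℓ) = K^(ℓ)(x,x')/√u^(ℓ)` the recursion reads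
`K^(ℓ+1)(x,x') = √u^(ℓ)·ρ(r^(ℓ)) + σ_b²`. As `ρ' ≥ 0` is the derivative of `ρ`, `ρ` maps `[-1,1]`
monotonically onto `[0,1]`. Cauchy–Schwarz and `√(AB) + s ≤ √((A+s)(B+s))` keep `r^(ℓ)` in
`[-1,1]`, and `ℓ·√u^(ℓ+1) ≤ (ℓ+1)·√u^(ℓ)` gives `r^(ℓ+1) ≥ ρ(r^(ℓ))·ℓ/(ℓ+1)`, whence
`r^(ℓ) ≥ r̂_−^(ℓ+1)` by induction; monotonicity of `ρ'` concludes. -/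

open Set

lemma continuous_rho : Continuous rho := by
  unfold rho
  fun_prop

lemma hasDerivAt_rho {r : ℝ} (h₁ : -1 < r) (h₂ : r < 1) : HasDerivAt rho (rhoPrime r) r := by
  have hr : 0 < 1 - r ^ 2 := by nlinarith
  have hsqrt : HasDerivAt (fun t : ℝ => √(1 - t ^ 2)) (1 / (2 * √(1 - r ^ 2)) * -(2 * r)) r :=
    (hasDerivAt_sqrt hr.ne').comp r (by simpa using (hasDerivAt_pow 2 r).const_sub 1)
  have hprod : HasDerivAt (fun t : ℝ => (π - arccos t) * t)
      ((0 - -(1 / √(1 - r ^ 2))) * r + (π - arccos r) * 1) r :=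
    ((hasDerivAt_const r π).sub (hasDerivAt_arccos h₁.ne' h₂.ne)).mul (hasDerivAt_id r)
  refine ((hsqrt.add hprod).const_mul (1 / π)).congr_deriv ?_
  have : √(1 - r ^ 2) ≠ 0 := (sqrt_pos.2 hr).ne'
  unfold rhoPrime
  field_simp
  ring

lemma rhoPrime_nonneg (r : ℝ) : 0 ≤ rhoPrime r :=
  div_nonneg (sub_nonneg.2 (arccos_le_pi r)) pi_pos.le

lemma rhoPrime_le_one (r : ℝ) : rhoPrime r ≤ 1 :=
  (div_le_one pi_pos).2 (by linarith [arccos_nonneg r])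

lemma rhoPrime_one : rhoPrime 1 = 1 := by
  simp [rhoPrime, pi_ne_zero]

lemma monotone_rhoPrime : Monotone rhoPrime := fun _ _ h =>
  div_le_div_of_nonneg_right (by linarith [antitone_arccos h]) pi_pos.le

lemma rho_one : rho 1 = 1 := by
  simp [rho, pi_ne_zero]

lemma rho_neg_one : rho (-1) = 0 := by
  simp [rho]

lemma monotoneOn_rho : MonotoneOn rho (Icc (-1) 1) := by
  refine monotoneOn_of_hasDerivWithinAt_nonneg (convex_Icc _ _) continuous_rho.continuousOn
    (fun r hr => ?_) (fun r _ => rhoPrime_nonneg r)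
  rw [interior_Icc] at hr ⊢
  exact (hasDerivAt_rho hr.1 hr.2).hasDerivWithinAt

lemma rho_mem_Icc {r : ℝ} (hr : r ∈ Icc (-1) 1) : rho r ∈ Icc 0 1 := by
  have hl : (-1 : ℝ) ∈ Icc (-1) 1 := by norm_num
  have hu : (1 : ℝ) ∈ Icc (-1) 1 := by norm_num
  exact ⟨rho_neg_one ▸ monotoneOn_rho hl hr hr.1, rho_one ▸ monotoneOn_rho hr hu hr.2⟩

lemma mul_rho_div_self (K : ℝ) : K * rho (K / K) = K := by
  rcases eq_or_ne K 0 with rfl | hK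
  · simp
  · rw [div_self hK, rho_one, mul_one]

lemma rHatM_succ_mem_Icc (ℓ : ℕ) : rHatM (ℓ + 1) ∈ Icc (-1) 1 := by
  induction ℓ with
  | zero => norm_num [rHatM]
  | succ n ih =>
    obtain ⟨hρ₀, hρ₁⟩ := rho_mem_Icc ih
    have hn : (n : ℝ) / (n + 1) ∈ Icc 0 1 :=
      ⟨by positivity, div_le_one_of_le₀ (by linarith) (by positivity)⟩
    show rho (rHatM (n + 1)) * n / (n + 1) ∈ Icc (-1) 1
    rw [mul_div_assoc]
    constructor <;> nlinarith [hn.1, hn.2]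

lemma div_mem_Icc_of_abs_le {a b : ℝ} (h : |a| ≤ b) : a / b ∈ Icc (-1) 1 := by
  have hb : 0 ≤ b := (abs_nonneg a).trans h
  rw [mem_Icc, ← abs_le, abs_div, abs_of_nonneg hb]
  exact div_le_one_of_le₀ h hb

lemma sqrt_mul_add_le {A B s : ℝ} (hA : 0 ≤ A) (hB : 0 ≤ B) (hs : 0 ≤ s) :
    √(A * B) + s ≤ √((A + s) * (B + s)) := by
  rw [sqrt_mul hA]
  refine le_sqrt_of_sq_le ?_
  have hAB : 2 * (√A * √B) ≤ A + B := by
    nlinarith [sq_nonneg (√A - √B), sq_sqrt hA, sq_sqrt hB]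
  nlinarith [mul_self_sqrt hA, mul_self_sqrt hB]

lemma uFun_succ (σb a b : ℝ) (ℓ : ℕ) :
    uFun σb a b (ℓ + 1) = (a ^ 2 + ℓ * σb ^ 2 + σb ^ 2) * (b ^ 2 + ℓ * σb ^ 2 + σb ^ 2) := by
  simp only [uFun]
  push_cast
  ring

lemma uFun_pos (σb : ℝ) {a b : ℝ} (ha : a ≠ 0) (hb : b ≠ 0) (ℓ : ℕ) : 0 < uFun σb a b ℓ := by
  unfold uFun
  positivity

lemma sqrt_uFun_add_le (σb a b : ℝ) (ℓ : ℕ) :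
    √(uFun σb a b ℓ) + σb ^ 2 ≤ √(uFun σb a b (ℓ + 1)) := by
  rw [uFun_succ]
  exact sqrt_mul_add_le (by positivity) (by positivity) (by positivity)

lemma natCast_mul_sqrt_uFun_succ_le (σb a b : ℝ) (ℓ : ℕ) :
    ℓ * √(uFun σb a b (ℓ + 1)) ≤ (ℓ + 1) * √(uFun σb a b ℓ) := by
  have hfactor : ∀ c : ℝ, ℓ * (c ^ 2 + ℓ * σb ^ 2 + σb ^ 2) ≤ (ℓ + 1) * (c ^ 2 + ℓ * σb ^ 2) :=
    fun c => by nlinarith [sq_nonneg c]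
  have hu : (ℓ : ℝ) ^ 2 * uFun σb a b (ℓ + 1) ≤ ((ℓ : ℝ) + 1) ^ 2 * uFun σb a b ℓ := by
    rw [uFun_succ, uFun]
    calc (ℓ : ℝ) ^ 2 * ((a ^ 2 + ℓ * σb ^ 2 + σb ^ 2) * (b ^ 2 + ℓ * σb ^ 2 + σb ^ 2))
        = (ℓ * (a ^ 2 + ℓ * σb ^ 2 + σb ^ 2)) * (ℓ * (b ^ 2 + ℓ * σb ^ 2 + σb ^ 2)) := by ring
      _ ≤ ((ℓ + 1) * (a ^ 2 + ℓ * σb ^ 2)) * ((ℓ + 1) * (b ^ 2 + ℓ * σb ^ 2)) :=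
        mul_le_mul (hfactor a) (hfactor b) (by positivity) (by positivity)
      _ = ((ℓ : ℝ) + 1) ^ 2 * ((a ^ 2 + ℓ * σb ^ 2) * (b ^ 2 + ℓ * σb ^ 2)) := by ring
  have h := sqrt_le_sqrt hu
  rwa [sqrt_mul (by positivity), sqrt_mul (by positivity), sqrt_sq (by positivity),
    sqrt_sq (by positivity)] at h

section Kernel

variable (σb : ℝ) {d : ℕ}

lemma Kker_self (v : EuclideanSpace ℝ (Fin d)) (ℓ : ℕ) : Kker σb ℓ v v = ‖v‖ ^ 2 + ℓ * σb ^ 2 := by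
  induction ℓ with
  | zero => simp [Kker]
  | succ n ih =>
    have hK : 0 ≤ Kker σb n v v := ih ▸ by positivity
    rw [Kker, sqrt_mul_self hK, mul_rho_div_self, ih]
    push_cast
    ring

lemma Kker_self_mul_Kker_self (x x' : EuclideanSpace ℝ (Fin d)) (ℓ : ℕ) :
    Kker σb ℓ x x * Kker σb ℓ x' x' = uFun σb ‖x‖ ‖x'‖ ℓ := by
  rw [Kker_self, Kker_self, uFun]

lemma Kker_succ (x x' : EuclideanSpace ℝ (Fin d)) (ℓ : ℕ) :
    Kker σb (ℓ + 1) x x' =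
      √(uFun σb ‖x‖ ‖x'‖ ℓ) * rho (Kker σb ℓ x x' / √(uFun σb ‖x‖ ‖x'‖ ℓ)) + σb ^ 2 := by
  rw [Kker, Kker_self_mul_Kker_self]

lemma Kdot_succ (x x' : EuclideanSpace ℝ (Fin d)) (ℓ : ℕ) :
    Kdot σb (ℓ + 1) x x' = rhoPrime (Kker σb ℓ x x' / √(uFun σb ‖x‖ ‖x'‖ ℓ)) := by
  rw [Kdot, Kker_self_mul_Kker_self]

lemma abs_Kker_le_sqrt_uFun (x x' : EuclideanSpace ℝ (Fin d)) (ℓ : ℕ) :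
    |Kker σb ℓ x x'| ≤ √(uFun σb ‖x‖ ‖x'‖ ℓ) := by
  induction ℓ with
  | zero =>
    simpa [Kker, uFun, ← mul_pow, sqrt_sq, mul_nonneg] using abs_real_inner_le_norm x x'
  | succ n ih =>
    obtain ⟨hρ₀, hρ₁⟩ := rho_mem_Icc (div_mem_Icc_of_abs_le ih)
    have hs := sqrt_nonneg (uFun σb ‖x‖ ‖x'‖ n)
    rw [Kker_succ, abs_of_nonneg (by positivity)]
    calc _ ≤ √(uFun σb ‖x‖ ‖x'‖ n) + σb ^ 2 := by nlinarith
      _ ≤ _ := sqrt_uFun_add_le σb _ _ n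

lemma Kker_div_sqrt_uFun_mem_Icc (x x' : EuclideanSpace ℝ (Fin d)) (ℓ : ℕ) :
    Kker σb ℓ x x' / √(uFun σb ‖x‖ ‖x'‖ ℓ) ∈ Icc (-1) 1 :=
  div_mem_Icc_of_abs_le (abs_Kker_le_sqrt_uFun σb x x' ℓ)

lemma rHatM_le_Kker_div_sqrt_uFun {x x' : EuclideanSpace ℝ (Fin d)} (hx : x ≠ 0) (hx' : x' ≠ 0)
    (ℓ : ℕ) : rHatM (ℓ + 1) ≤ Kker σb ℓ x x' / √(uFun σb ‖x‖ ‖x'‖ ℓ) := by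
  induction ℓ with
  | zero => exact (Kker_div_sqrt_uFun_mem_Icc σb x x' 0).1
  | succ n ih =>
    set u := √(uFun σb ‖x‖ ‖x'‖ n)
    set r := Kker σb n x x' / u
    have hu' : 0 < √(uFun σb ‖x‖ ‖x'‖ (n + 1)) :=
      sqrt_pos.2 (uFun_pos σb (norm_ne_zero_iff.2 hx) (norm_ne_zero_iff.2 hx') _)
    have hρ : rho (rHatM (n + 1)) ≤ rho r :=
      monotoneOn_rho (rHatM_succ_mem_Icc n) (Kker_div_sqrt_uFun_mem_Icc σb x x' n) ih
    have hρ₀ := (rho_mem_Icc (rHatM_succ_mem_Icc n)).1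
    have hu : 0 ≤ u := sqrt_nonneg _
    show rho (rHatM (n + 1)) * n / (n + 1) ≤ Kker σb (n + 1) x x' / _
    rw [Kker_succ, div_le_div_iff₀ (by positivity) hu']
    calc rho (rHatM (n + 1)) * n * √(uFun σb ‖x‖ ‖x'‖ (n + 1))
        ≤ rho (rHatM (n + 1)) * ((n + 1) * u) := by
          rw [mul_assoc]
          exact mul_le_mul_of_nonneg_left (natCast_mul_sqrt_uFun_succ_le σb _ _ n) hρ₀
      _ ≤ (u * rho r + σb ^ 2) * (n + 1) := by nlinarith [mul_le_mul_of_nonneg_left hρ hu]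

end Kernel

theorem Kdot_form_and_bound_general (σb : ℝ) {d : ℕ}
    (x x' : EuclideanSpace ℝ (Fin d)) (hx : x ≠ 0) (hx' : x' ≠ 0) :
    ∀ ℓ : ℕ,
      Kdot σb (ℓ + 1) x x' =
          rhoPrime (Kker σb ℓ x x' / Real.sqrt (uFun σb ‖x‖ ‖x'‖ ℓ)) ∧
      rhoPrime (rHatM (ℓ + 1)) ≤ Kdot σb (ℓ + 1) x x' ∧
      Kdot σb (ℓ + 1) x x' ≤ rhoPrime 1 ∧
      rhoPrime (1 : ℝ) = 1 := by
  intro ℓ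
  rw [Kdot_succ]
  exact ⟨rfl, monotone_rhoPrime (rHatM_le_Kker_div_sqrt_uFun σb hx hx' ℓ),
    (rhoPrime_le_one _).trans_eq rhoPrime_one.symm, rhoPrime_one⟩

/-- Lemma A.12 and Corollary A.13: for every `ℓ ≥ 1` (written `ℓ+1`),
`K̇^(ℓ)(x,x') = ρ'(K^(ℓ−1)(x,x')/√(u^(ℓ−1)))` and
`ρ'(r̂_−^(ℓ)) ≤ K̇^(ℓ)(x,x') ≤ ρ'(1) = 1`. -/
theorem Kdot_form_and_bound (σb : ℝ) (hσb : 0 ≤ σb) {d : ℕ}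
    (x x' : EuclideanSpace ℝ (Fin d)) (hx : x ≠ 0) (hx' : x' ≠ 0) :
    ∀ ℓ : ℕ,
      Kdot σb (ℓ + 1) x x' =
          rhoPrime (Kker σb ℓ x x' / Real.sqrt (uFun σb ‖x‖ ‖x'‖ ℓ)) ∧
      rhoPrime (rHatM (ℓ + 1)) ≤ Kdot σb (ℓ + 1) x x' ∧
      Kdot σb (ℓ + 1) x x' ≤ rhoPrime 1 ∧
      rhoPrime (1 : ℝ) = 1 :=
  Kdot_form_and_bound_general σb x x' hx hx'
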